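/- arXiv:2208.13282 — 3 statements merged into one kernel-verified Lean document; each statement's English description precedes it below -/
import Mathlib

section
/- Assume Q is Hom-finite and has a Serre functor S. Then for every object q of Q there is a natural isomorphism of functors G_{S(q)} ≅ F_q from the category of left A-modules to Mod(Q,A). -/
open CategoryTheory Limits TensorProduct

universe u

namespace QShaped

variable (k : Type u) [CommRing k] (A : Type u) [Ring A] [Algebra k A]

/-- The `k`-module structure on an `A`-module, restricted along `algebraMap k A`. -/
noncomputable def kmod (M : ModuleCat.{u} A) : Module k M :=
  RestrictScalars.module k A M

attribute [local instance] kmod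

noncomputable def ktower (M : ModuleCat.{u} A) : IsScalarTower k A M :=
  RestrictScalars.isScalarTower k A M

attribute [local instance] ktower

noncomputable def ksmulcomm (M : ModuleCat.{u} A) : SMulCommClass k A M := by
  constructor
  intro c a m
  show c • a • m = a • c • m
  have h : ∀ x : M, c • x = (algebraMap k A c) • x := fun _ => rfl
  rw [h, h, ← mul_smul, ← mul_smul, Algebra.commutes]

attribute [local instance] ksmulcomm

noncomputable instance : CategoryTheory.Linear k (ModuleCat.{u} A) where
  homModule _ _ := ModuleCat.Hom.instModule
  smul_comp := by
    intros
    ext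
    simp only [ModuleCat.hom_comp, ModuleCat.hom_smul, LinearMap.comp_apply,
      LinearMap.smul_apply, LinearMap.map_smul_of_tower]


variable {k A}

/-- Tensoring a `k`-module with the `A`-module `M` (on the left), as a functor. -/
noncomputable def tensorObj (M : ModuleCat.{u} A) : ModuleCat.{u} k ⥤ ModuleCat.{u} A where
  obj V := ModuleCat.of A (M ⊗[k] V)
  map {V V'} g := ModuleCat.ofHom
    (AlgebraTensorModule.map (LinearMap.id : M →ₗ[A] M) (g.hom : V →ₗ[k] V'))
  map_id := by
    intro V
    ext : 1
    exact AlgebraTensorModule.map_id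
  map_comp := by
    intro V₁ V₂ V₃ g h
    ext : 1
    show AlgebraTensorModule.map (LinearMap.id : M →ₗ[A] M) (h.hom ∘ₗ g.hom) =
      AlgebraTensorModule.map LinearMap.id h.hom ∘ₗ AlgebraTensorModule.map LinearMap.id g.hom
    rw [← AlgebraTensorModule.map_comp]
    rfl


variable (k A) in
/-- The functor sending an `A`-module `M` to the functor `V ↦ M ⊗[k] V`. -/
noncomputable def tensorFunctor :
    ModuleCat.{u} A ⥤ (ModuleCat.{u} k ⥤ ModuleCat.{u} A) where
  obj M := tensorObj M
  map {M M'} φ :=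
    { app := fun V => ModuleCat.ofHom
        (AlgebraTensorModule.map (φ.hom : M →ₗ[A] M') (LinearMap.id : V →ₗ[k] V))
      naturality := fun {V V'} g => by
        ext : 1
        show AlgebraTensorModule.map (φ.hom : M →ₗ[A] M') LinearMap.id ∘ₗ
            AlgebraTensorModule.map LinearMap.id (g.hom : V →ₗ[k] V') =
          AlgebraTensorModule.map LinearMap.id g.hom ∘ₗ AlgebraTensorModule.map φ.hom LinearMap.id
        rw [← AlgebraTensorModule.map_comp, ← AlgebraTensorModule.map_comp]
        simp }
  map_id M := by
    ext V : 2
    ext : 1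
    show AlgebraTensorModule.map _ _ = _
    have : ((𝟙 M : M ⟶ M).hom : M →ₗ[A] M) = LinearMap.id := rfl
    rw [this, AlgebraTensorModule.map_id]
    rfl
  map_comp {M₁ M₂ M₃} φ ψ := by
    ext V : 2
    ext : 1
    show AlgebraTensorModule.map _ _ = AlgebraTensorModule.map (ψ.hom : M₂ →ₗ[A] M₃) LinearMap.id ∘ₗ
      AlgebraTensorModule.map (φ.hom : M₁ →ₗ[A] M₂) LinearMap.id
    rw [← AlgebraTensorModule.map_comp]
    rfl


/-- Precomposition as an `A`-linear map on `k`-linear hom spaces into an `A`-module. -/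
noncomputable def precompA {M : ModuleCat.{u} A} {V V' : ModuleCat.{u} k}
    (f : V' →ₗ[k] V) : (V →ₗ[k] M) →ₗ[A] (V' →ₗ[k] M) where
  toFun h := h.comp f
  map_add' h₁ h₂ := LinearMap.add_comp f h₂ h₁
  map_smul' a h := LinearMap.smul_comp a h f

/-- Postcomposition as an `A`-linear map on `k`-linear hom spaces into `A`-modules. -/
noncomputable def postcompA {M M' : ModuleCat.{u} A} {V : ModuleCat.{u} k}
    (φ : M →ₗ[A] M') : (V →ₗ[k] M) →ₗ[A] (V →ₗ[k] M') where
  toFun h := (φ.restrictScalars k).comp h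
  map_add' h₁ h₂ := LinearMap.comp_add h₁ h₂ _
  map_smul' a h := by
    ext v
    exact φ.map_smul a (h v)

/-- The functor sending an `A`-module `M` to the functor `V ↦ Homₖ(V, M)`. -/
noncomputable def homFunctor :
    ModuleCat.{u} A ⥤ ((ModuleCat.{u} k)ᵒᵖ ⥤ ModuleCat.{u} A) where
  obj M :=
    { obj := fun V => ModuleCat.of A (V.unop →ₗ[k] M)
      map := fun {V V'} f => ModuleCat.ofHom (precompA (M := M) (f.unop.hom : V'.unop →ₗ[k] V.unop))
      map_id := fun V => by ext h : 2; rfl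
      map_comp := fun f g => by ext h : 2; rfl }
  map {M M'} φ :=
    { app := fun V => ModuleCat.ofHom (postcompA (V := V.unop) (φ.hom : M →ₗ[A] M'))
      naturality := fun {V V'} f => by ext h : 2; rfl }
  map_id M := by ext V h : 4; rfl
  map_comp φ ψ := by ext V h : 4; rfl


variable (Q : Type u) [Category.{u} Q] [Preadditive Q] [CategoryTheory.Linear k Q]

variable (k A)

/-- The functor `F_q : Mod(A) ⥤ Mod(Q,A)`, `F_q(M) = Q(q,-) ⊗ₖ M`. -/
noncomputable def Ffun (q : Q) : ModuleCat.{u} A ⥤ (Q ⥤ ModuleCat.{u} A) :=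
  tensorFunctor k A ⋙
    (Functor.whiskeringLeft Q (ModuleCat.{u} k) (ModuleCat.{u} A)).obj
      ((linearCoyoneda k Q).obj (Opposite.op q))

/-- The functor `G_q : Mod(A) ⥤ Mod(Q,A)`, `G_q(M) = Homₖ(Q(-,q), M)`. -/
noncomputable def Gfun (q : Q) : ModuleCat.{u} A ⥤ (Q ⥤ ModuleCat.{u} A) :=
  homFunctor ⋙
    (Functor.whiskeringLeft Q ((ModuleCat.{u} k)ᵒᵖ) (ModuleCat.{u} A)).obj
      ((linearYoneda k Q).obj q).rightOp


variable {k Q}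

/-- Two-sided composition `t ↦ w ≫ t ≫ u` as a `k`-linear map between hom modules. -/
noncomputable def conjMap {a b c d : Q} (w : a ⟶ b) (u : c ⟶ d) :
    (b ⟶ c) →ₗ[k] (a ⟶ d) where
  toFun t := w ≫ t ≫ u
  map_add' t₁ t₂ := by simp
  map_smul' c' t := by simp

variable (k Q)

/-- Hom-finiteness: each hom `k`-module is finitely generated projective. -/
def HomFinite : Prop :=
  ∀ p q : Q, Module.Finite k (p ⟶ q) ∧ Module.Projective k (p ⟶ q)

/-- Local boundedness of `Q`. -/
def LocallyBounded : Prop :=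
  ∀ q : Q, {p : Q | ∃ f : p ⟶ q, f ≠ 0}.Finite ∧ {r : Q | ∃ f : q ⟶ r, f ≠ 0}.Finite

/-- A Serre functor on `Q`: a `k`-linear autoequivalence `S` together with natural
isomorphisms `Q(p,q) ≅ Homₖ(Q(q, S p), k)`. -/
structure SerreData where
  S : Q ⥤ Q
  equiv : S.IsEquivalence
  additive : S.Additive
  linear : S.Linear k
  iso : ∀ p q : Q, (p ⟶ q) ≃ₗ[k] ((q ⟶ S.obj p) →ₗ[k] k)
  naturality : ∀ {p' p q q' : Q} (u : p' ⟶ p) (w : q ⟶ q') (h : p ⟶ q),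
    (iso p' q' (u ≫ h ≫ w) : (q' ⟶ S.obj p') →ₗ[k] k) =
      (iso p q h : (q ⟶ S.obj p) →ₗ[k] k) ∘ₗ conjMap w (S.map u)



section Aux

theorem dth_bij (R V W : Type u) [CommRing R] [AddCommGroup V] [AddCommGroup W]
    [Module R V] [Module R W] [Module.Finite R V] [Module.Projective R V] :
    Function.Bijective (dualTensorHom R V W) := by
  obtain ⟨n, f, g, -, -, hfg⟩ := Module.Finite.exists_comp_eq_id_of_projective R V
  set φ : Fin n → Module.Dual R V := fun i => (LinearMap.proj i) ∘ₗ g with hφ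
  set x : Fin n → V := fun i => f (Pi.single i 1) with hx
  have key : ∀ v : V, ∑ i, φ i v • x i = v := by
    intro v
    have h1 : f (g v) = v := congrArg (fun h => h v) (congrArg DFunLike.coe hfg)
    calc ∑ i, φ i v • x i = ∑ i, f (Pi.single i (g v i)) := by
          refine Finset.sum_congr rfl fun i _ => ?_
          rw [hx, ← map_smul]
          congr 1
          ext j
          by_cases h : j = i
          · subst h; simp; rfl
          · simp [Pi.single_eq_of_ne h]
      _ = f (∑ i, Pi.single i (g v i)) := (map_sum f _ _).symm
      _ = v := by rw [Finset.univ_sum_single]; exact h1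
  have keydual : ∀ ξ : Module.Dual R V, ∑ i, ξ (x i) • φ i = ξ := by
    intro ξ
    ext v
    have := congrArg ξ (key v)
    rw [map_sum] at this
    simpa [mul_comm] using this
  refine Function.bijective_iff_has_inverse.mpr
    ⟨fun h => ∑ i, φ i ⊗ₜ[R] h (x i), ?_, ?_⟩
  · intro t
    induction t using TensorProduct.induction_on with
    | zero => simp
    | tmul ξ w =>
        calc ∑ i, φ i ⊗ₜ[R] (dualTensorHom R V W (ξ ⊗ₜ w)) (x i)
            = ∑ i, (ξ (x i) • φ i) ⊗ₜ[R] w := by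
              refine Finset.sum_congr rfl fun i _ => ?_
              rw [dualTensorHom_apply, TensorProduct.tmul_smul, TensorProduct.smul_tmul']
          _ = (∑ i, ξ (x i) • φ i) ⊗ₜ[R] w := by rw [TensorProduct.sum_tmul]
          _ = ξ ⊗ₜ w := by rw [keydual]
    | add s t hs ht =>
        simp only [map_add, LinearMap.add_apply, TensorProduct.tmul_add,
          Finset.sum_add_distrib, hs, ht]
  · intro h
    ext v
    rw [map_sum]
    simp only [dualTensorHom_apply, LinearMap.sum_apply, LinearMap.smul_apply]
    calc ∑ i, φ i v • h (x i) = h (∑ i, φ i v • x i) := by rw [map_sum]; simp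
      _ = h v := by rw [key]

variable {k A Q}

/-- The `k`-linear version of the comparison map `F_q(M)(p) → G_{S q}(M)(p)`. -/
noncomputable def serreKlin (σ : SerreData k Q) (q : Q) (M : ModuleCat.{u} A) (p : Q) :
    (M ⊗[k] (q ⟶ p)) →ₗ[k] ((p ⟶ σ.S.obj q) →ₗ[k] M) :=
  (dualTensorHom k (p ⟶ σ.S.obj q) M) ∘ₗ
    (TensorProduct.comm k M ((p ⟶ σ.S.obj q) →ₗ[k] k)).toLinearMap ∘ₗ
      (LinearEquiv.lTensor M (σ.iso q p)).toLinearMap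

@[simp] lemma serreKlin_tmul (σ : SerreData k Q) (q : Q) (M : ModuleCat.{u} A) (p : Q)
    (m : M) (f : q ⟶ p) (g : p ⟶ σ.S.obj q) :
    serreKlin σ q M p (m ⊗ₜ[k] f) g = σ.iso q p f g • m := by
  simp [serreKlin]

/-- The `A`-linear comparison map. -/
noncomputable def serreAlin (σ : SerreData k Q) (q : Q) (M : ModuleCat.{u} A) (p : Q) :
    (M ⊗[k] (q ⟶ p)) →ₗ[A] ((p ⟶ σ.S.obj q) →ₗ[k] M) where
  toFun := serreKlin σ q M p
  map_add' := map_add _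
  map_smul' a x := by
    simp only [RingHom.id_apply]
    induction x using TensorProduct.induction_on with
    | zero => simp
    | tmul m f =>
        rw [TensorProduct.smul_tmul']
        ext g
        rw [LinearMap.smul_apply, serreKlin_tmul, serreKlin_tmul, smul_comm]
    | add x y hx hy => rw [smul_add, map_add, map_add, hx, hy, smul_add]

lemma serreAlin_bijective (hfin : HomFinite k Q) (σ : SerreData k Q) (q : Q)
    (M : ModuleCat.{u} A) (p : Q) :
    Function.Bijective (serreAlin σ q M p) := by
  haveI := (hfin p (σ.S.obj q)).1
  haveI := (hfin p (σ.S.obj q)).2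
  have h1 : Function.Bijective (serreKlin σ q M p) := by
    rw [serreKlin, LinearMap.coe_comp, LinearMap.coe_comp]
    exact (dth_bij k (p ⟶ σ.S.obj q) M).comp
      (((TensorProduct.comm k M ((p ⟶ σ.S.obj q) →ₗ[k] k)).bijective).comp
        (LinearEquiv.lTensor M (σ.iso q p)).bijective)
  exact h1

/-- The component isomorphism `F_q(M)(p) ≅ G_{S q}(M)(p)` in `ModuleCat A`. -/
noncomputable def serreCompIso (hfin : HomFinite k Q) (σ : SerreData k Q) (q : Q)
    (M : ModuleCat.{u} A) (p : Q) :
    ((Ffun k A Q q).obj M).obj p ≅ ((Gfun k A Q (σ.S.obj q)).obj M).obj p :=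
  (LinearEquiv.ofBijective (serreAlin σ q M p)
    (serreAlin_bijective hfin σ q M p)).toModuleIso

lemma serre_naturality_p (hfin : HomFinite k Q) (σ : SerreData k Q) (q : Q)
    (M : ModuleCat.{u} A) {p p' : Q} (w : p ⟶ p') :
    ((Ffun k A Q q).obj M).map w ≫ (serreCompIso hfin σ q M p').hom =
      (serreCompIso hfin σ q M p).hom ≫ ((Gfun k A Q (σ.S.obj q)).obj M).map w := by
  refine ModuleCat.hom_ext ?_
  refine TensorProduct.AlgebraTensorModule.ext fun (m : M) (f : q ⟶ p) => ?_
  refine LinearMap.ext fun (g : p' ⟶ σ.S.obj q) => ?_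
  show serreKlin σ q M p' (m ⊗ₜ[k] (f ≫ w)) g = serreKlin σ q M p (m ⊗ₜ[k] f) (w ≫ g)
  rw [serreKlin_tmul, serreKlin_tmul]
  have h := σ.naturality (𝟙 q) w f
  rw [Category.id_comp] at h
  rw [h]
  simp [conjMap]

/-- The isomorphism `F_q(M) ≅ G_{S q}(M)` in `Mod(Q,A)`. -/
noncomputable def serreObjIso (hfin : HomFinite k Q) (σ : SerreData k Q) (q : Q)
    (M : ModuleCat.{u} A) :
    (Ffun k A Q q).obj M ≅ (Gfun k A Q (σ.S.obj q)).obj M :=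
  NatIso.ofComponents (fun p => serreCompIso hfin σ q M p)
    (fun w => serre_naturality_p hfin σ q M w)

end Aux

/-- If `Q` is Hom-finite and has a Serre functor `S`, then for every object
`q` of `Q` there is a natural isomorphism of functors `G_{S(q)} ≅ F_q` from the category of
left `A`-modules to `Mod(Q,A)`. -/
theorem serre_gives_iso_of_adjoints
    (hfin : HomFinite k Q) (σ : SerreData k Q) (q : Q) :
    Nonempty (Gfun k A Q (σ.S.obj q) ≅ Ffun k A Q q) := by
  refine ⟨(NatIso.ofComponents (fun M => serreObjIso hfin σ q M) ?_).symm⟩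
  intro M M' φ
  ext p : 2
  refine ModuleCat.hom_ext ?_
  refine TensorProduct.AlgebraTensorModule.ext fun (m : M) (f : q ⟶ p) => ?_
  refine LinearMap.ext fun (g : p ⟶ σ.S.obj q) => ?_
  show serreKlin σ q M' p ((φ.hom m) ⊗ₜ[k] f) g = φ.hom (serreKlin σ q M p (m ⊗ₜ[k] f) g)
  rw [serreKlin_tmul, serreKlin_tmul, LinearMap.map_smul_of_tower]

end QShaped
end

section
/- One has ∂² = 0 and ∂_n² = 0 for every n ≥ 1; hence (A^(ℕ), ∂) and (A^n, ∂_n) are differential A-modules. -/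
set_option synthInstance.maxHeartbeats 400000
set_option maxHeartbeats 1000000

open scoped DualNumber

universe u

namespace QShapedExample

variable (k : Type u) [CommRing k]

/-- `k` is a hereditary ring: every ideal is projective. -/
def IsHereditary : Prop := ∀ I : Ideal k, Module.Projective k I

/-- The ring `A = k[X,Y]/(X², XY)`. -/
abbrev Adef : Type u :=
  MvPolynomial (Fin 2) k ⧸
    Ideal.span ({MvPolynomial.X 0 ^ 2, MvPolynomial.X 0 * MvPolynomial.X 1} :
      Set (MvPolynomial (Fin 2) k))

/-- The image `x` of `X` in `A`. -/
noncomputable def xA : Adef k := Ideal.Quotient.mk _ (MvPolynomial.X 0)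

/-- The image `y` of `Y` in `A`. -/
noncomputable def yA : Adef k := Ideal.Quotient.mk _ (MvPolynomial.X 1)

/-- The Fibonacci numbers in the convention `F₀ = 1`, `F₁ = 2`, `Fᵢ = Fᵢ₋₁ + Fᵢ₋₂`. -/
def myFib : ℕ → ℕ
  | 0 => 1
  | 1 => 2
  | (n+2) => myFib (n+1) + myFib n

/-- `S` is the Zeckendorf representation of `n`: no two consecutive indices, and the
corresponding Fibonacci numbers sum to `n`. -/
def IsZeckRep (S : Finset ℕ) (n : ℕ) : Prop :=
  (∀ i ∈ S, i + 1 ∉ S) ∧ (∑ i ∈ S, myFib i) = n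

/-- `n` has even Zeckendorf expansion (the digit `d₀` is `0`). -/
def EvenZ (n : ℕ) : Prop := ∃ S : Finset ℕ, IsZeckRep S n ∧ 0 ∉ S

/-- `n` has odd Zeckendorf expansion (the digit `d₀` is `1`). -/
def OddZ (n : ℕ) : Prop := ∃ S : Finset ℕ, IsZeckRep S n ∧ 0 ∈ S

/-- `nthE i` is the `(i+1)`-st smallest number with even Zeckendorf expansion;
that is, `e(m) = nthE (m-1)` in the notation of the paper. -/
noncomputable def nthE : ℕ → ℕ := Nat.nth EvenZ

lemma myFib_pos : ∀ n, 0 < myFib n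
  | 0 => Nat.one_pos
  | 1 => Nat.zero_lt_two
  | (n+2) => Nat.add_pos_left (myFib_pos (n+1)) _

lemma myFib_strictMono : StrictMono myFib := by
  apply strictMono_nat_of_lt_succ
  intro n
  match n with
  | 0 => exact Nat.one_lt_two
  | (m+1) => exact Nat.lt_add_of_pos_right (myFib_pos m)

lemma evenZ_myFib (i : ℕ) (hi : 1 ≤ i) : EvenZ (myFib i) := by
  refine ⟨{i}, ⟨?_, ?_⟩, ?_⟩
  · intro j hj
    simp only [Finset.mem_singleton] at hj ⊢
    omega
  · simp
  · simp only [Finset.mem_singleton]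
    omega

lemma evenZ_infinite : {n : ℕ | EvenZ n}.Infinite := by
  apply Set.infinite_of_injective_forall_mem (f := fun i : ℕ => myFib (i + 1))
  · intro a b hab
    have := myFib_strictMono.injective hab
    omega
  · intro i
    exact evenZ_myFib (i + 1) (Nat.succ_le_succ (Nat.zero_le i))

lemma nthE_injective : Function.Injective nthE :=
  Nat.nth_injective evenZ_infinite


open Classical in
/-- The entries of the matrix `∂` (rows and columns indexed by positive integers):
row `i` has `x` in column `e(i+1)`, and additionally `y` in column `e(i+1)+1` when `i`
has even Zeckendorf expansion.  (Note `e(i+1) = nthE i`.) -/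
noncomputable def Dent (i j : ℕ+) : Adef k :=
  if (j : ℕ) = nthE (i : ℕ) then xA k
  else if EvenZ (i : ℕ) ∧ (j : ℕ) = nthE (i : ℕ) + 1 then yA k
  else 0

/-- The action of the matrix `∂` on a finitely supported column vector, as a bare
function: `(∂v)ᵢ = ∑ⱼ ∂ᵢⱼ vⱼ`. -/
noncomputable def Dapp (v : ℕ+ →₀ Adef k) (i : ℕ+) : Adef k :=
  v.sum fun j a => Dent k i j * a

/-- An a priori finite superset of the support of `∂v`. -/
noncomputable def candSet (v : ℕ+ →₀ Adef k) : Set ℕ+ :=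
  (fun i : ℕ+ => nthE (i : ℕ)) ⁻¹'
    (((fun j : ℕ+ => (j : ℕ)) '' ↑v.support) ∪
      ((fun n : ℕ => n - 1) '' ((fun j : ℕ+ => (j : ℕ)) '' ↑v.support)))

lemma candSet_finite (v : ℕ+ →₀ Adef k) : (candSet k v).Finite :=
  Set.Finite.preimage ((nthE_injective.comp PNat.coe_injective).injOn)
    (((v.support.finite_toSet).image _).union
      (((v.support.finite_toSet).image _).image _))

lemma dapp_mem_cand {v : ℕ+ →₀ Adef k} {i : ℕ+} (h : Dapp k v i ≠ 0) :
    i ∈ candSet k v := by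
  obtain ⟨j, hj, hne⟩ := Finset.exists_ne_zero_of_sum_ne_zero h
  have hDent : Dent k i j ≠ 0 := by
    intro h0
    apply hne
    show Dent k i j * v j = 0
    rw [h0, zero_mul]
  unfold candSet
  simp only [Set.mem_preimage, Set.mem_union, Set.mem_image, Finset.mem_coe]
  by_cases h1 : (j : ℕ) = nthE (i : ℕ)
  · exact Or.inl ⟨j, hj, h1⟩
  · by_cases h2 : EvenZ (i : ℕ) ∧ (j : ℕ) = nthE (i : ℕ) + 1
    · obtain ⟨he, hj2⟩ := h2
      refine Or.inr ⟨(j : ℕ), ⟨j, hj, rfl⟩, ?_⟩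
      omega
    · exfalso
      apply hDent
      simp only [Dent, if_neg h1, if_neg h2]

/-- The endomorphism `∂` of `A^{(ℕ)}`, given by the matrix with entries `Dent`. -/
noncomputable def Dlin : (ℕ+ →₀ Adef k) →ₗ[Adef k] (ℕ+ →₀ Adef k) where
  toFun v := Finsupp.onFinset (candSet_finite k v).toFinset (fun i => Dapp k v i)
    (fun i hi => (Set.Finite.mem_toFinset _).mpr (dapp_mem_cand k hi))
  map_add' v w := by
    ext i
    simp only [Finsupp.onFinset_apply, Finsupp.add_apply]
    unfold Dapp
    rw [Finsupp.sum_add_index' (fun j => mul_zero _) (fun j a b => mul_add _ a b)]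
  map_smul' a v := by
    ext i
    simp only [Finsupp.onFinset_apply, Finsupp.smul_apply, smul_eq_mul, RingHom.id_apply]
    unfold Dapp
    rw [Finsupp.sum_smul_index (fun j => mul_zero _), Finsupp.mul_sum]
    apply Finsupp.sum_congr
    intro j _
    ring

/-- The upper-left `n × n` corner `∂ₙ` of the matrix `∂` (recall that rows and columns of
`∂` are indexed by the positive integers). -/
noncomputable def Dmat (n : ℕ) : Matrix (Fin n) (Fin n) (Adef k) :=
  fun i j => Dent k ⟨(i : ℕ) + 1, Nat.succ_pos _⟩ ⟨(j : ℕ) + 1, Nat.succ_pos _⟩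



/-! ### Auxiliary Zeckendorf machinery -/

lemma myFib_gt : ∀ n : ℕ, n < myFib n
  | 0 => Nat.zero_lt_one
  | 1 => Nat.one_lt_two
  | (n+2) => by
    have h1 := myFib_gt (n+1)
    have h2 := myFib_pos n
    have h3 : myFib (n+2) = myFib (n+1) + myFib n := rfl
    omega

/-- The greedy index: the largest `m` with `myFib m ≤ n` (for `n ≥ 1`). -/
def gi (n : ℕ) : ℕ := Nat.findGreatest (fun m => myFib m ≤ n) n

lemma gi_le {n : ℕ} (hn : 1 ≤ n) : myFib (gi n) ≤ n := by
  rcases eq_or_ne (gi n) 0 with h | h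
  · rw [h]
    have : myFib 0 = 1 := rfl
    omega
  · have hspec : Nat.findGreatest (fun m => myFib m ≤ n) n = gi n := rfl
    exact Nat.findGreatest_of_ne_zero (P := fun m => myFib m ≤ n) (m := gi n) hspec h

lemma gi_gt {n : ℕ} (hn : 1 ≤ n) : n < myFib (gi n + 1) := by
  by_contra hcon
  push_neg at hcon
  have h1 := myFib_gt (gi n + 1)
  have h2 : gi n + 1 ≤ n := by omega
  have h3 : gi n + 1 ≤ gi n :=
    Nat.le_findGreatest (P := fun m => myFib m ≤ n) h2 hcon
  omega

/-- The greedy Zeckendorf representation. -/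
def zeck : ℕ → Finset ℕ
  | 0 => ∅
  | (n+1) => insert (gi (n+1)) (zeck (n + 1 - myFib (gi (n+1))))
  decreasing_by
    have := myFib_pos (gi (n+1))
    omega

lemma zeck_spec : ∀ n : ℕ, IsZeckRep (zeck n) n ∧ ∀ i ∈ zeck n, myFib i ≤ n := by
  intro n
  induction n using Nat.strong_induction_on with
  | _ n IH =>
    match n with
    | 0 =>
      refine ⟨⟨?_, ?_⟩, ?_⟩ <;> simp [zeck]
    | (p+1) =>
      set m := gi (p+1) with hmdef
      set r := p + 1 - myFib m with hrdef
      have hm1 : myFib m ≤ p + 1 := gi_le (by omega)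
      have hm2 : p + 1 < myFib (m+1) := gi_gt (by omega)
      have hz : zeck (p+1) = insert m (zeck r) := by rw [zeck]
      have hrlt : r < p + 1 := by
        have := myFib_pos m
        omega
      obtain ⟨⟨hnc, hsum⟩, hbd⟩ := IH r hrlt
      clear_value m r
      have hsmall : ∀ i ∈ zeck r, i + 2 ≤ m := by
        intro i hi
        have h1 : myFib i ≤ r := hbd i hi
        have hip := myFib_pos i
        rcases m with _ | m'
        · have e1 : myFib (0 + 1) = 2 := rfl
          have e0 : myFib 0 = 1 := rfl
          omega
        · have he : myFib (m' + 1 + 1) = myFib (m' + 1) + myFib m' := rfl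
          have h2 : myFib i < myFib m' := by omega
          have h3 := myFib_strictMono.lt_iff_lt.mp h2
          omega
      have hmnot : m ∉ zeck r := fun h => by have := hsmall m h; omega
      refine ⟨⟨?_, ?_⟩, ?_⟩
      · intro i hi
        rw [hz] at hi ⊢
        rcases Finset.mem_insert.mp hi with rfl | hi'
        · intro hmem
          rcases Finset.mem_insert.mp hmem with h | h
          · omega
          · have := hsmall _ h; omega
        · intro hmem
          rcases Finset.mem_insert.mp hmem with h | h
          · have := hsmall _ hi'; omega
          · exact hnc i hi' h
      · rw [hz, Finset.sum_insert hmnot, hsum]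
        omega
      · intro i hi
        rw [hz] at hi
        rcases Finset.mem_insert.mp hi with rfl | hi'
        · exact hm1
        · exact le_trans (hbd i hi') (by omega)

lemma sum_myFib_lt : ∀ m : ℕ, ∀ S : Finset ℕ, (∀ i ∈ S, i + 1 ∉ S) →
    (∀ i ∈ S, i < m) → ∑ i ∈ S, myFib i < myFib m := by
  intro m
  induction m using Nat.strong_induction_on with
  | _ m IH =>
    intro S hnc hlt
    rcases S.eq_empty_or_nonempty with rfl | hne
    · simpa using myFib_pos m
    · set a := S.max' hne with ha
      have haS : a ∈ S := S.max'_mem hne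
      have haMax : ∀ i ∈ S, i ≤ a := fun i hi => S.le_max' i hi
      clear_value a
      have ham : a < m := hlt a haS
      have hsplit : myFib a + ∑ i ∈ S.erase a, myFib i = ∑ i ∈ S, myFib i :=
        Finset.add_sum_erase S myFib haS
      have herase : ∀ i ∈ S.erase a, i + 1 < a := by
        intro i hi
        have h1 : i ∈ S := Finset.mem_of_mem_erase hi
        have h2 : i ≠ a := Finset.ne_of_mem_erase hi
        have h3 : i ≤ a := haMax i h1
        have h4 : i + 1 ≠ a := fun h => hnc i h1 (h ▸ haS)
        omega
      rcases Nat.eq_zero_or_pos a with rfl | hapos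
      · have hemp : S.erase 0 = ∅ :=
          Finset.eq_empty_of_forall_notMem (fun i hi => by have := herase i hi; omega)
        rw [hemp, Finset.sum_empty] at hsplit
        have := myFib_strictMono ham
        omega
      · obtain ⟨a', ha'⟩ : ∃ a', a = a' + 1 := ⟨a - 1, by omega⟩
        have hIH := IH a' (by omega) (S.erase a)
          (fun i hi hc => hnc i (Finset.mem_of_mem_erase hi) (Finset.mem_of_mem_erase hc))
          (fun i hi => by have := herase i hi; omega)
        have hfib : myFib (a' + 2) = myFib (a' + 1) + myFib a' := rfl
        have hmono : myFib (a' + 2) ≤ myFib m := myFib_strictMono.monotone (by omega)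
        have hf : myFib a = myFib (a' + 1) := by rw [ha']
        omega

lemma isZeckRep_max_bounds {S : Finset ℕ} {n : ℕ} (h : IsZeckRep S n) (hne : S.Nonempty) :
    myFib (S.max' hne) ≤ n ∧ n < myFib (S.max' hne + 1) := by
  constructor
  · rw [← h.2]
    exact Finset.single_le_sum (fun i _ => Nat.zero_le _) (S.max'_mem hne)
  · rw [← h.2]
    exact sum_myFib_lt (S.max' hne + 1) S h.1 (fun i hi => by
      have := S.le_max' i hi; omega)

lemma zeckRep_unique : ∀ n : ℕ, ∀ S T : Finset ℕ, IsZeckRep S n → IsZeckRep T n → S = T := by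
  intro n
  induction n using Nat.strong_induction_on with
  | _ n IH =>
    intro S T hS hT
    rcases S.eq_empty_or_nonempty with rfl | hSne
    · rcases T.eq_empty_or_nonempty with rfl | hTne
      · rfl
      · exfalso
        have h1 : 0 < ∑ i ∈ T, myFib i := Finset.sum_pos (fun i _ => myFib_pos i) hTne
        have h2 := hT.2
        have h3 := hS.2
        simp only [Finset.sum_empty] at h3
        omega
    · rcases T.eq_empty_or_nonempty with rfl | hTne
      · exfalso
        have h1 : 0 < ∑ i ∈ S, myFib i := Finset.sum_pos (fun i _ => myFib_pos i) hSne
        have h2 := hS.2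
        have h3 := hT.2
        simp only [Finset.sum_empty] at h3
        omega
      · obtain ⟨hS1, hS2⟩ := isZeckRep_max_bounds hS hSne
        obtain ⟨hT1, hT2⟩ := isZeckRep_max_bounds hT hTne
        have hab : S.max' hSne = T.max' hTne := by
          have h1 : myFib (S.max' hSne) < myFib (T.max' hTne + 1) := by omega
          have h2 : myFib (T.max' hTne) < myFib (S.max' hSne + 1) := by omega
          have h3 := myFib_strictMono.lt_iff_lt.mp h1
          have h4 := myFib_strictMono.lt_iff_lt.mp h2
          omega
        set a := S.max' hSne with ha
        have haS : a ∈ S := S.max'_mem hSne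
        have haT : a ∈ T := hab ▸ T.max'_mem hTne
        have hpos := myFib_pos a
        have hs2 := hS.2
        have ht2 := hT.2
        have hSsum : ∑ i ∈ S.erase a, myFib i = n - myFib a := by
          have h := Finset.add_sum_erase S myFib haS
          omega
        have hTsum : ∑ i ∈ T.erase a, myFib i = n - myFib a := by
          have h := Finset.add_sum_erase T myFib haT
          omega
        have hrec := IH (n - myFib a) (by omega) (S.erase a) (T.erase a)
          ⟨fun i hi hc => hS.1 i (Finset.mem_of_mem_erase hi) (Finset.mem_of_mem_erase hc), hSsum⟩
          ⟨fun i hi hc => hT.1 i (Finset.mem_of_mem_erase hi) (Finset.mem_of_mem_erase hc), hTsum⟩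
        rw [← Finset.insert_erase haS, ← Finset.insert_erase haT, hrec]

lemma zeck_eq {S : Finset ℕ} {n : ℕ} (h : IsZeckRep S n) : S = zeck n :=
  zeckRep_unique n S (zeck n) h (zeck_spec n).1

lemma not_evenZ_of_oddZ {n : ℕ} (h : OddZ n) : ¬ EvenZ n := by
  rintro ⟨T, hT, hT0⟩
  obtain ⟨S, hS, hS0⟩ := h
  rw [zeckRep_unique n S T hS hT] at hS0
  exact hT0 hS0

lemma shift_nonconsec {S : Finset ℕ} (hS : ∀ i ∈ S, i + 1 ∉ S) :
    ∀ j ∈ S.image (· + 1), j + 1 ∉ S.image (· + 1) := by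
  intro j hj hc
  simp only [Finset.mem_image] at hj hc
  obtain ⟨i, hi, rfl⟩ := hj
  obtain ⟨i', hi', he⟩ := hc
  have : i' = i + 1 := by omega
  exact hS i hi (this ▸ hi')

lemma sum_image_shift (S : Finset ℕ) :
    ∑ j ∈ S.image (· + 1), myFib j = ∑ i ∈ S, myFib (i + 1) :=
  Finset.sum_image (fun i _ j _ h => by omega)

lemma sum_shift_lt : ∀ N : ℕ, ∀ S T : Finset ℕ, (∀ i ∈ S, i + 1 ∉ S) → (∀ i ∈ T, i + 1 ∉ T) →
    ∑ i ∈ T, myFib i ≤ N → ∑ i ∈ S, myFib i < ∑ i ∈ T, myFib i →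
    ∑ i ∈ S, myFib (i + 1) < ∑ i ∈ T, myFib (i + 1) := by
  intro N
  induction N with
  | zero => intro S T _ _ hN hlt; omega
  | succ N IHN =>
    intro S T hS hT hN hlt
    have hTne : T.Nonempty := by
      rcases T.eq_empty_or_nonempty with rfl | h
      · simp only [Finset.sum_empty] at hlt; omega
      · exact h
    rcases S.eq_empty_or_nonempty with rfl | hSne
    · rw [Finset.sum_empty]
      exact Finset.sum_pos (fun i _ => myFib_pos _) hTne
    · set a := S.max' hSne with ha
      set b := T.max' hTne with hb
      have haS : a ∈ S := S.max'_mem hSne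
      have hbT : b ∈ T := T.max'_mem hTne
      have haMax : ∀ i ∈ S, i ≤ a := fun i hi => S.le_max' i hi
      have hbMax : ∀ i ∈ T, i ≤ b := fun i hi => T.le_max' i hi
      clear_value a b
      have hab : a ≤ b := by
        have h1 : myFib a ≤ ∑ i ∈ S, myFib i :=
          Finset.single_le_sum (fun i _ => Nat.zero_le _) haS
        have h2 : ∑ i ∈ T, myFib i < myFib (b + 1) :=
          sum_myFib_lt (b+1) T hT (fun i hi => by have := hbMax i hi; omega)
        have h3 : myFib a < myFib (b+1) := by omega
        have h4 := myFib_strictMono.lt_iff_lt.mp h3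
        omega
      rcases lt_or_eq_of_le hab with hltab | heq
      · have h1 : ∑ i ∈ S, myFib (i+1) < myFib (a + 2) := by
          rw [← sum_image_shift]
          exact sum_myFib_lt (a+2) (S.image (· + 1)) (shift_nonconsec hS) (fun j hj => by
            simp only [Finset.mem_image] at hj
            obtain ⟨i, hi, rfl⟩ := hj
            have := haMax i hi
            omega)
        have h2 : myFib (b+1) ≤ ∑ i ∈ T, myFib (i+1) :=
          Finset.single_le_sum (f := fun i => myFib (i + 1)) (fun i _ => Nat.zero_le _) hbT
        have h3 := myFib_strictMono.monotone (show a + 2 ≤ b + 1 by omega)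
        omega
      · subst heq
        have hSe : ∀ i ∈ S.erase a, i + 1 ∉ S.erase a := fun i hi hc =>
          hS i (Finset.mem_of_mem_erase hi) (Finset.mem_of_mem_erase hc)
        have hTe : ∀ i ∈ T.erase a, i + 1 ∉ T.erase a := fun i hi hc =>
          hT i (Finset.mem_of_mem_erase hi) (Finset.mem_of_mem_erase hc)
        have e1 : myFib a + ∑ i ∈ S.erase a, myFib i = ∑ i ∈ S, myFib i :=
          Finset.add_sum_erase S myFib haS
        have e2 : myFib a + ∑ i ∈ T.erase a, myFib i = ∑ i ∈ T, myFib i :=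
          Finset.add_sum_erase T myFib hbT
        have e1' : myFib (a+1) + ∑ i ∈ S.erase a, myFib (i+1) = ∑ i ∈ S, myFib (i+1) :=
          Finset.add_sum_erase S (fun i => myFib (i+1)) haS
        have e2' : myFib (a+1) + ∑ i ∈ T.erase a, myFib (i+1) = ∑ i ∈ T, myFib (i+1) :=
          Finset.add_sum_erase T (fun i => myFib (i+1)) hbT
        have hpa := myFib_pos a
        have hNle : ∑ i ∈ T.erase a, myFib i ≤ N := by omega
        have hlt' : ∑ i ∈ S.erase a, myFib i < ∑ i ∈ T.erase a, myFib i := by omega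
        have hrec := IHN (S.erase a) (T.erase a) hSe hTe hNle hlt'
        omega

/-- The Zeckendorf shift map: `Ez n` is obtained by shifting every index of the Zeckendorf
representation of `n` by one. -/
noncomputable def Ez (n : ℕ) : ℕ := ∑ i ∈ zeck n, myFib (i + 1)

lemma Ez_strictMono : StrictMono Ez := by
  intro m n hmn
  have hm := (zeck_spec m).1
  have hn := (zeck_spec n).1
  exact sum_shift_lt n (zeck m) (zeck n) hm.1 hn.1 hn.2.le (by rw [hm.2, hn.2]; exact hmn)

lemma evenZ_Ez (n : ℕ) : EvenZ (Ez n) := by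
  refine ⟨(zeck n).image (· + 1), ⟨shift_nonconsec (zeck_spec n).1.1, ?_⟩, ?_⟩
  · rw [sum_image_shift]
    rfl
  · simp only [Finset.mem_image]
    rintro ⟨j, _, hj⟩
    omega

lemma Ez_surj {n : ℕ} (h : EvenZ n) : ∃ m, Ez m = n := by
  obtain ⟨S, ⟨hnc, hsum⟩, h0⟩ := h
  refine ⟨∑ i ∈ S, myFib (i - 1), ?_⟩
  have hpos : ∀ i ∈ S, 1 ≤ i := by
    intro i hi
    rcases Nat.eq_zero_or_pos i with rfl | h
    · exact absurd hi h0
    · exact h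
  have hsumT : ∑ j ∈ S.image (· - 1), myFib j = ∑ i ∈ S, myFib (i - 1) :=
    Finset.sum_image (fun i hi j hj hij => by
      have := hpos i hi; have := hpos j hj; omega)
  have hncT : ∀ j ∈ S.image (· - 1), j + 1 ∉ S.image (· - 1) := by
    intro j hj hc
    simp only [Finset.mem_image] at hj hc
    obtain ⟨i, hi, hij⟩ := hj
    obtain ⟨i', hi', hij'⟩ := hc
    have h1 := hpos i hi
    have h2 := hpos i' hi'
    have h3 : i' = i + 1 := by omega
    exact hnc i hi (h3 ▸ hi')
  have hzT : S.image (· - 1) = zeck (∑ i ∈ S, myFib (i-1)) := zeck_eq ⟨hncT, hsumT⟩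
  show ∑ i ∈ zeck (∑ i ∈ S, myFib (i - 1)), myFib (i + 1) = n
  rw [← hzT]
  have h4 : ∑ j ∈ S.image (· - 1), myFib (j + 1) = ∑ i ∈ S, myFib (i - 1 + 1) :=
    Finset.sum_image (fun i hi j hj hij => by
      have := hpos i hi; have := hpos j hj; omega)
  rw [h4, ← hsum]
  apply Finset.sum_congr rfl
  intro i hi
  have := hpos i hi
  congr 1
  omega

lemma nthE_eq_Ez : nthE = Ez := by
  rw [nthE]
  refine ((Nat.nth_strictMono evenZ_infinite).range_inj Ez_strictMono).mp ?_
  rw [Nat.range_nth_of_infinite evenZ_infinite]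
  ext n
  constructor
  · intro h
    obtain ⟨m, hm⟩ := Ez_surj h
    exact ⟨m, hm⟩
  · rintro ⟨m, rfl⟩
    exact evenZ_Ez m

lemma not_evenZ_nthE_add_one {i : ℕ} (h : EvenZ i) : ¬ EvenZ (nthE i + 1) := by
  apply not_evenZ_of_oddZ
  rw [nthE_eq_Ez]
  obtain ⟨S, hS, h0⟩ := h
  have hz : S = zeck i := zeck_eq hS
  have h0' : 0 ∉ zeck i := hz ▸ h0
  refine ⟨insert 0 ((zeck i).image (· + 1)), ⟨?_, ?_⟩, Finset.mem_insert_self 0 _⟩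
  · intro j hj hc
    rcases Finset.mem_insert.mp hj with rfl | hj'
    · rcases Finset.mem_insert.mp hc with h1 | h1
      · omega
      · simp only [Finset.mem_image] at h1
        obtain ⟨i', hi', he⟩ := h1
        have h2 : i' = 0 := by omega
        exact h0' (h2 ▸ hi')
    · rcases Finset.mem_insert.mp hc with h1 | h1
      · simp only [Finset.mem_image] at hj'
        obtain ⟨i', _, he⟩ := hj'
        omega
      · simp only [Finset.mem_image] at hj' h1
        obtain ⟨i1, hi1, he1⟩ := hj'
        obtain ⟨i2, hi2, he2⟩ := h1
        have h3 : i2 = i1 + 1 := by omega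
        exact (zeck_spec i).1.1 i1 hi1 (h3 ▸ hi2)
  · have h0im : (0:ℕ) ∉ (zeck i).image (· + 1) := by
      simp only [Finset.mem_image]
      rintro ⟨j, _, hj⟩
      omega
    rw [Finset.sum_insert h0im, sum_image_shift]
    have h5 : myFib 0 = 1 := rfl
    show myFib 0 + Ez i = Ez i + 1
    omega

/-! ### Algebra in `A` -/

lemma xA_mul_xA : xA k * xA k = 0 := by
  rw [xA, ← map_mul, Ideal.Quotient.eq_zero_iff_mem]
  apply Ideal.subset_span
  rw [← sq]
  exact Set.mem_insert _ _

lemma xA_mul_yA : xA k * yA k = 0 := by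
  rw [xA, yA, ← map_mul, Ideal.Quotient.eq_zero_iff_mem]
  exact Ideal.subset_span (Set.mem_insert_of_mem _ rfl)

lemma dent_mul_dent (i j l : ℕ+) : Dent k i j * Dent k j l = 0 := by
  classical
  have hx := xA_mul_xA k
  have hxy := xA_mul_yA k
  have hyx : yA k * xA k = 0 := by rw [mul_comm]; exact xA_mul_yA k
  unfold Dent
  by_cases h1 : (j:ℕ) = nthE (i:ℕ)
  · rw [if_pos h1]
    by_cases h3 : (l:ℕ) = nthE (j:ℕ)
    · rw [if_pos h3]; exact hx
    · rw [if_neg h3]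
      by_cases h4 : EvenZ (j:ℕ) ∧ (l:ℕ) = nthE (j:ℕ) + 1
      · rw [if_pos h4]; exact hxy
      · rw [if_neg h4]; exact mul_zero _
  · rw [if_neg h1]
    by_cases h2 : EvenZ (i:ℕ) ∧ (j:ℕ) = nthE (i:ℕ) + 1
    · rw [if_pos h2]
      by_cases h3 : (l:ℕ) = nthE (j:ℕ)
      · rw [if_pos h3]; exact hyx
      · rw [if_neg h3]
        by_cases h4 : EvenZ (j:ℕ) ∧ (l:ℕ) = nthE (j:ℕ) + 1
        · exact absurd (h2.2 ▸ h4.1) (not_evenZ_nthE_add_one h2.1)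
        · rw [if_neg h4]; exact mul_zero _
    · rw [if_neg h2]
      exact zero_mul _

/-- One has `∂² = 0` and `∂ₙ² = 0` for every `n ≥ 1`; hence
`(A^{(ℕ)}, ∂)` and `(Aⁿ, ∂ₙ)` are differential `A`-modules. -/
theorem Dlin_sq_zero_and_Dmat_sq_zero
    (hnoeth : IsNoetherianRing k) (hhered : IsHereditary k) :
    (Dlin k ∘ₗ Dlin k = 0) ∧ (∀ n : ℕ, 1 ≤ n → Dmat k n * Dmat k n = 0) := by
  constructor
  · apply LinearMap.ext
    intro v
    ext i
    simp only [LinearMap.comp_apply, LinearMap.zero_apply, Finsupp.coe_zero, Pi.zero_apply,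
      Dlin, LinearMap.coe_mk, AddHom.coe_mk, Finsupp.onFinset_apply]
    unfold Dapp
    rw [Finsupp.sum]
    apply Finset.sum_eq_zero
    intro j hj
    show Dent k i j * (v.sum fun l a => Dent k j l * a) = 0
    rw [Finsupp.mul_sum, Finsupp.sum]
    apply Finset.sum_eq_zero
    intro l hl
    rw [← mul_assoc, dent_mul_dent, zero_mul]
  · intro n hn
    ext i l
    rw [Matrix.mul_apply]
    simp only [Matrix.zero_apply]
    apply Finset.sum_eq_zero
    intro j _
    exact dent_mul_dent k _ _ _

end QShapedExample
end

section
/- For a, b ∈ A one has a·x + b·y = 0 if and only if a belongs to the ideal (x,y) and b belongs to the ideal (x). -/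
set_option synthInstance.maxHeartbeats 400000
set_option maxHeartbeats 1000000

open scoped DualNumber

universe u

namespace QShapedExample

variable (k : Type u) [CommRing k]

/-- For `a, b ∈ A` one has `a·x + b·y = 0` if and only if `a ∈ (x,y)`
and `b ∈ (x)`. -/
theorem mul_x_add_mul_y_eq_zero_iff
    (hnoeth : IsNoetherianRing k) (hhered : IsHereditary k) (a b : Adef k) :
    a * xA k + b * yA k = 0 ↔
      a ∈ Ideal.span ({xA k, yA k} : Set (Adef k)) ∧
      b ∈ Ideal.span ({xA k} : Set (Adef k)) := by
  classical
  let I : Ideal (MvPolynomial (Fin 2) k) :=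
    Ideal.span ({MvPolynomial.X 0 ^ 2, MvPolynomial.X 0 * MvPolynomial.X 1} :
      Set (MvPolynomial (Fin 2) k))
  have hx2 : xA k * xA k = 0 := by
    rw [xA, ← map_mul, Ideal.Quotient.eq_zero_iff_mem]
    exact Ideal.subset_span (by simp [sq])
  have hxy : xA k * yA k = 0 := by
    rw [xA, yA, ← map_mul, Ideal.Quotient.eq_zero_iff_mem]
    exact Ideal.subset_span (by simp)
  constructor
  · intro h
    obtain ⟨p, hp⟩ := Ideal.Quotient.mk_surjective (I := I) a
    obtain ⟨q, hq⟩ := Ideal.Quotient.mk_surjective (I := I) b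
    have hmem : p * MvPolynomial.X 0 + q * MvPolynomial.X 1 ∈ I := by
      rw [← Ideal.Quotient.eq_zero_iff_mem]
      rw [map_add, map_mul, map_mul, hp, hq]
      simpa [xA, yA] using h
    rw [Ideal.mem_span_pair] at hmem
    obtain ⟨f, g, hfg⟩ := hmem
    set p' := p - f * MvPolynomial.X 0 with hp'def
    set q' := q - g * MvPolynomial.X 0 with hq'def
    have E : p' * MvPolynomial.X 0 + q' * MvPolynomial.X 1 = 0 := by
      rw [hp'def, hq'def]
      linear_combination -hfg
    have hc0 : MvPolynomial.coeff 0 p' = 0 := by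
      have h2 := congrArg (MvPolynomial.coeff (Finsupp.single (0 : Fin 2) 1)) E
      simpa [MvPolynomial.coeff_mul_X', Finsupp.mem_support_iff, Finsupp.single_apply]
        using h2
    have hcq : ∀ m : Fin 2 →₀ ℕ, m 0 = 0 → MvPolynomial.coeff m q' = 0 := by
      intro m hm
      have h2 := congrArg (MvPolynomial.coeff (m + Finsupp.single (1 : Fin 2) 1)) E
      simpa [MvPolynomial.coeff_mul_X', Finsupp.mem_support_iff, Finsupp.add_apply,
        Finsupp.single_apply, hm] using h2
    have hp'mem : p' ∈ Ideal.span
        ({MvPolynomial.X 0, MvPolynomial.X 1} : Set (MvPolynomial (Fin 2) k)) := by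
      have himg : (MvPolynomial.X '' ({0, 1} : Set (Fin 2)) :
          Set (MvPolynomial (Fin 2) k)) = {MvPolynomial.X 0, MvPolynomial.X 1} := by
        simp [Set.image_insert_eq]
      rw [← himg, MvPolynomial.mem_ideal_span_X_image]
      intro m hm
      have hmne : m ≠ 0 := by
        rintro rfl
        exact (MvPolynomial.mem_support_iff.mp hm) hc0
      by_cases h0 : m 0 = 0
      · refine ⟨1, by simp, fun h1 => hmne ?_⟩
        ext i
        fin_cases i <;> simpa
      · exact ⟨0, by simp, h0⟩
    have hq'mem : q' ∈ Ideal.span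
        ({MvPolynomial.X 0} : Set (MvPolynomial (Fin 2) k)) := by
      have himg : (MvPolynomial.X '' ({0} : Set (Fin 2)) :
          Set (MvPolynomial (Fin 2) k)) = {MvPolynomial.X 0} := by
        simp
      rw [← himg, MvPolynomial.mem_ideal_span_X_image]
      intro m hm
      refine ⟨0, by simp, fun h0 => ?_⟩
      exact (MvPolynomial.mem_support_iff.mp hm) (hcq m h0)
    constructor
    · rw [← hp]
      have h1 : p = p' + f * MvPolynomial.X 0 := by rw [hp'def]; ring
      rw [h1, map_add, map_mul]
      refine Ideal.add_mem _ ?_ (Ideal.mul_mem_left _ _ (Ideal.subset_span (by simp [xA, I])))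
      have h3 := Ideal.mem_map_of_mem (Ideal.Quotient.mk I) hp'mem
      rw [Ideal.map_span] at h3
      simpa [Set.image_insert_eq, xA, yA] using h3
    · rw [← hq]
      have h1 : q = q' + g * MvPolynomial.X 0 := by rw [hq'def]; ring
      rw [h1, map_add, map_mul]
      refine Ideal.add_mem _ ?_ (Ideal.mul_mem_left _ _ (Ideal.subset_span (by simp [xA, I])))
      have h3 := Ideal.mem_map_of_mem (Ideal.Quotient.mk I) hq'mem
      rw [Ideal.map_span] at h3
      simpa [xA] using h3
  · rintro ⟨ha, hb⟩
    rw [Ideal.mem_span_pair] at ha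
    obtain ⟨c, d, hcd⟩ := ha
    rw [Ideal.mem_span_singleton'] at hb
    obtain ⟨e, he⟩ := hb
    rw [← hcd, ← he]
    linear_combination c * hx2 + (d + e) * hxy

end QShapedExample
end
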